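/- arXiv:math/0701226 — 4 statements merged into one kernel-verified Lean document; each statement's English description precedes it below -/
import Mathlib

section
/- Suppose \sum_{i=1}^d \pi_i L_i < 0 and let s > 0 satisfy \eta(s) < 1. Then E[T^s] < \infty. -/
open MeasureTheory Finset Filter Matrix ENNReal

section AuxMultChain

lemma multChain_pathSum_eq (d n : ℕ) (w : Fin d → ENNReal) (q : Fin d → Fin d → ENNReal)
    (hq : ∀ i, ∑ j, q i j = 1) :
    ∑ idx : Fin (n+1) → Fin d, w (idx 0) * ∏ k : Fin n, q (idx k.castSucc) (idx k.succ)
      = ∑ i, w i := by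
  induction n generalizing w with
  | zero =>
    rw [← Equiv.sum_comp (Fin.consEquiv (fun _ : Fin 1 => Fin d))
      (fun idx => w (idx 0) * ∏ k : Fin 0, q (idx k.castSucc) (idx k.succ))]
    simp [Fintype.sum_prod_type]
  | succ n ih =>
    rw [← Equiv.sum_comp (Fin.consEquiv (fun _ : Fin (n+2) => Fin d))
      (fun idx => w (idx 0) * ∏ k : Fin (n+1), q (idx k.castSucc) (idx k.succ))]
    rw [Fintype.sum_prod_type]
    have key : ∀ (p : Fin d) (idx' : Fin (n+1) → Fin d),
        w ((Fin.consEquiv (fun _ : Fin (n+2) => Fin d)) (p, idx') 0) *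
          ∏ k : Fin (n+1), q (((Fin.consEquiv (fun _ : Fin (n+2) => Fin d)) (p, idx')) k.castSucc)
            (((Fin.consEquiv (fun _ : Fin (n+2) => Fin d)) (p, idx')) k.succ)
        = w p * (q p (idx' 0) * ∏ k : Fin n, q (idx' k.castSucc) (idx' k.succ)) := by
      intro p idx'
      simp [Fin.consEquiv, Fin.prod_univ_succ, ← Fin.succ_castSucc]
    simp_rw [key]
    have h1 : ∀ p : Fin d, ∑ idx' : Fin (n+1) → Fin d,
        w p * (q p (idx' 0) * ∏ k : Fin n, q (idx' k.castSucc) (idx' k.succ))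
        = w p * ∑ idx' : Fin (n+1) → Fin d,
            q p (idx' 0) * ∏ k : Fin n, q (idx' k.castSucc) (idx' k.succ) := by
      intro p; rw [Finset.mul_sum]
    simp_rw [h1]
    have h2 : ∀ p : Fin d, ∑ idx' : Fin (n+1) → Fin d,
        q p (idx' 0) * ∏ k : Fin n, q (idx' k.castSucc) (idx' k.succ) = 1 := by
      intro p
      have := ih (fun j => q p j)
      rw [this, hq p]
    simp_rw [h2, mul_one]

lemma multChain_pathSum_le (d n : ℕ) (w u : Fin d → ENNReal) (q : Fin d → Fin d → ENNReal)
    (e : ENNReal) (hq : ∀ i, ∑ j, q i j * u j ≤ e * u i) :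
    ∑ idx : Fin (n+1) → Fin d,
        w (idx 0) * (∏ k : Fin n, q (idx k.castSucc) (idx k.succ)) * u (idx (Fin.last n))
      ≤ e ^ n * ∑ i, w i * u i := by
  induction n generalizing w with
  | zero =>
    rw [← Equiv.sum_comp (Fin.consEquiv (fun _ : Fin 1 => Fin d))
      (fun idx => w (idx 0) * (∏ k : Fin 0, q (idx k.castSucc) (idx k.succ)) * u (idx (Fin.last 0)))]
    simp [Fintype.sum_prod_type, Fin.consEquiv, Fin.last]
  | succ n ih =>
    rw [← Equiv.sum_comp (Fin.consEquiv (fun _ : Fin (n+2) => Fin d))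
      (fun idx => w (idx 0) * (∏ k : Fin (n+1), q (idx k.castSucc) (idx k.succ)) * u (idx (Fin.last (n+1))))]
    rw [Fintype.sum_prod_type]
    have key : ∀ (p : Fin d) (idx' : Fin (n+1) → Fin d),
        w ((Fin.consEquiv (fun _ : Fin (n+2) => Fin d)) (p, idx') 0) *
          (∏ k : Fin (n+1), q (((Fin.consEquiv (fun _ : Fin (n+2) => Fin d)) (p, idx')) k.castSucc)
            (((Fin.consEquiv (fun _ : Fin (n+2) => Fin d)) (p, idx')) k.succ)) *
          u (((Fin.consEquiv (fun _ : Fin (n+2) => Fin d)) (p, idx')) (Fin.last (n+1)))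
        = (w p * q p (idx' 0)) * (∏ k : Fin n, q (idx' k.castSucc) (idx' k.succ)) *
            u (idx' (Fin.last n)) := by
      intro p idx'
      have hlast : (Fin.last (n+1)) = (Fin.last n).succ := (Fin.succ_last n).symm
      simp only [Fin.consEquiv, Equiv.coe_fn_mk, Fin.cons_zero, hlast, Fin.cons_succ,
        Fin.prod_univ_succ, Fin.castSucc_zero, Fin.succ_zero_eq_one]
      have h2 : ∀ k : Fin n, (Fin.cons p idx' : Fin (n+2) → Fin d) k.succ.castSucc = idx' k.castSucc := by
        intro k; rw [← Fin.succ_castSucc, Fin.cons_succ]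
      simp_rw [h2]
      ring
    simp_rw [key]
    calc ∑ p : Fin d, ∑ idx' : Fin (n+1) → Fin d,
          (w p * q p (idx' 0)) * (∏ k : Fin n, q (idx' k.castSucc) (idx' k.succ)) * u (idx' (Fin.last n))
        = ∑ idx' : Fin (n+1) → Fin d,
            ((fun j => ∑ p : Fin d, w p * q p j) (idx' 0)) * (∏ k : Fin n, q (idx' k.castSucc) (idx' k.succ)) *
              u (idx' (Fin.last n)) := by
          rw [Finset.sum_comm]
          refine Finset.sum_congr rfl fun idx' _ => ?_
          simp only
          rw [Finset.sum_mul, Finset.sum_mul]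
      _ ≤ e ^ n * ∑ j, (∑ p : Fin d, w p * q p j) * u j := ih (fun j => ∑ p : Fin d, w p * q p j)
      _ ≤ e ^ (n+1) * ∑ i, w i * u i := by
          have h4 : ∑ j, (∑ p : Fin d, w p * q p j) * u j = ∑ p : Fin d, w p * ∑ j, q p j * u j := by
            simp_rw [Finset.sum_mul, Finset.mul_sum]
            rw [Finset.sum_comm]
            exact Finset.sum_congr rfl fun p _ => Finset.sum_congr rfl fun j _ => by ring
          rw [h4]
          have hsum : ∑ p : Fin d, w p * (e * u p) = e * ∑ i, w i * u i := by
            rw [Finset.mul_sum]; exact Finset.sum_congr rfl fun p _ => by ring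
          calc e ^ n * ∑ p : Fin d, w p * ∑ j, q p j * u j
              ≤ e ^ n * ∑ p : Fin d, w p * (e * u p) := by gcongr with p; exact hq p
            _ = e ^ (n+1) * ∑ i, w i * u i := by rw [hsum, pow_succ]; ring

lemma multChain_prod_Icc_one {M : Type*} [CommMonoid M] (f : ℕ → M) (n : ℕ) :
    ∏ k ∈ Finset.Icc 1 n, f k = ∏ k : Fin n, f ((k : ℕ) + 1) := by
  induction n with
  | zero => simp
  | succ n ih =>
    rw [Finset.prod_Icc_succ_top (by omega), ih, Fin.prod_univ_castSucc]
    simp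

lemma multChain_J_eq
    (d : ℕ) (P : Matrix (Fin d) (Fin d) ℝ)
    {Ω : Type} [MeasurableSpace Ω] (μ : Measure Ω)
    (F : Fin d → Fin d → Measure ℝ)
    (I : ℕ → Ω → Fin d) (α : ℕ → Ω → ℝ)
    (hI : ∀ r, Measurable (I r)) (hα : ∀ r, Measurable (α r))
    (hlaw : ∀ (n : ℕ) (idx : Fin (n + 1) → Fin d) (B : Fin n → Set ℝ),
      (∀ k, MeasurableSet (B k)) →
      μ {ω | (∀ k : Fin (n + 1), I (k : ℕ) ω = idx k) ∧
             ∀ k : Fin n, α ((k : ℕ) + 1) ω ∈ B k}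
        = μ {ω | I 0 ω = idx 0} *
            ∏ k : Fin n,
              (ENNReal.ofReal (P (idx k.castSucc) (idx k.succ)) *
                F (idx k.castSucc) (idx k.succ) (B k)))
    (n NN : ℕ) (C : ℕ → ℝ≥0∞) (S : ℕ → Set ℝ) (hS : ∀ m, MeasurableSet (S m))
    (u : Fin d → ℝ≥0∞) :
    ∫⁻ ω, (∏ k : Fin n,
        (∑ m ∈ Finset.range NN, C m * (S m).indicator (fun _ => 1) (α ((k : ℕ)+1) ω)))
        * u (I n ω) ∂μ
     = ∑ idx : Fin (n+1) → Fin d,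
         μ {ω | I 0 ω = idx 0} *
           (∏ k : Fin n, (ENNReal.ofReal (P (idx k.castSucc) (idx k.succ)) *
              ∑ m ∈ Finset.range NN, C m * F (idx k.castSucc) (idx k.succ) (S m))) *
           u (idx (Fin.last n)) := by
  classical
  set g : ℕ → Ω → ℝ≥0∞ := fun k ω =>
    ∑ m ∈ Finset.range NN, C m * (S m).indicator (fun _ => 1) (α (k+1) ω) with hg
  have hgmeas : ∀ k, Measurable (g k) := by
    intro k
    apply Finset.measurable_sum
    intro m _
    exact (measurable_const.indicator (hS m)).comp (hα (k+1)) |>.const_mul _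
  -- the path sets
  set Pth : (Fin (n+1) → Fin d) → Set Ω :=
    fun idx => {ω | ∀ k : Fin (n+1), I (k : ℕ) ω = idx k} with hPth
  have hPthmeas : ∀ idx, MeasurableSet (Pth idx) := by
    intro idx
    have : Pth idx = ⋂ k : Fin (n+1), I (k : ℕ) ⁻¹' {idx k} := by
      ext ω; simp [hPth, Set.mem_iInter]
    rw [this]
    exact MeasurableSet.iInter fun k => (hI k) (measurableSet_singleton _)
  -- step (i): pointwise decomposition
  have step1 : ∀ ω, (∏ k : Fin n, g k ω) * u (I n ω)
      = ∑ idx : Fin (n+1) → Fin d,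
          (Pth idx).indicator (fun _ => (1:ℝ≥0∞)) ω * ((∏ k : Fin n, g k ω) * u (idx (Fin.last n))) := by
    intro ω
    set idx₀ : Fin (n+1) → Fin d := fun k => I (k : ℕ) ω with hidx₀
    rw [Finset.sum_eq_single_of_mem idx₀ (Finset.mem_univ _)]
    · have hmem : ω ∈ Pth idx₀ := fun k => rfl
      rw [Set.indicator_of_mem hmem, one_mul]
      have : idx₀ (Fin.last n) = I n ω := by simp [hidx₀]
      rw [this]
    · intro idx _ hne
      have : ω ∉ Pth idx := by
        intro hmem
        exact hne (funext fun k => ((hmem k).symm ▸ rfl)).symm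
      rw [Set.indicator_of_notMem this, zero_mul]
  -- rewrite integral as sum over idx
  have hmeas_gprod : Measurable fun ω => ∏ k : Fin n, g (k : ℕ) ω := by
    apply Finset.measurable_prod
    intro k _
    exact hgmeas _
  rw [lintegral_congr step1, lintegral_finset_sum]
  swap
  · intro idx _
    exact ((measurable_const.indicator (hPthmeas idx))).mul (hmeas_gprod.mul measurable_const)
  refine Finset.sum_congr rfl fun idx _ => ?_
  -- per idx computation
  have expand : ∀ ω, (Pth idx).indicator (fun _ => (1:ℝ≥0∞)) ω * ((∏ k : Fin n, g k ω) * u (idx (Fin.last n)))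
      = ∑ f ∈ Fintype.piFinset (fun _ : Fin n => Finset.range NN),
          ((∏ k : Fin n, C (f k)) *
            (({ω | (∀ k : Fin (n+1), I (k : ℕ) ω = idx k) ∧
               ∀ k : Fin n, α ((k : ℕ) + 1) ω ∈ S (f k)}).indicator (fun _ => (1:ℝ≥0∞)) ω))
          * u (idx (Fin.last n)) := by
    intro ω
    rw [← Finset.sum_mul, ← mul_assoc]
    congr 1
    have hprod : ∏ k : Fin n, g k ω
        = ∑ f ∈ Fintype.piFinset (fun _ : Fin n => Finset.range NN),
            ∏ k : Fin n, (C (f k) * (S (f k)).indicator (fun _ => (1:ℝ≥0∞)) (α ((k:ℕ)+1) ω)) := by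
      simp only [hg]
      exact Finset.prod_univ_sum _ _
    rw [hprod, Finset.mul_sum]
    refine Finset.sum_congr rfl fun f _ => ?_
    rw [Finset.prod_mul_distrib]
    by_cases hmem : ω ∈ Pth idx
    · by_cases hall : ∀ k : Fin n, α ((k:ℕ)+1) ω ∈ S (f k)
      · have h1 : ∀ k : Fin n, (S (f k)).indicator (fun _ => (1:ℝ≥0∞)) (α ((k:ℕ)+1) ω) = 1 :=
          fun k => Set.indicator_of_mem (hall k) _
        have h2 : ω ∈ {ω | (∀ k : Fin (n+1), I (k : ℕ) ω = idx k) ∧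
            ∀ k : Fin n, α ((k : ℕ) + 1) ω ∈ S (f k)} := ⟨hmem, hall⟩
        rw [Set.indicator_of_mem hmem, Set.indicator_of_mem h2]
        simp [h1]
      · push_neg at hall
        obtain ⟨k0, hk0⟩ := hall
        have h2 : ω ∉ {ω | (∀ k : Fin (n+1), I (k : ℕ) ω = idx k) ∧
            ∀ k : Fin n, α ((k : ℕ) + 1) ω ∈ S (f k)} := fun h => hk0 (h.2 k0)
        rw [Set.indicator_of_notMem h2]
        have : ∏ k : Fin n, (S (f k)).indicator (fun _ => (1:ℝ≥0∞)) (α ((k:ℕ)+1) ω) = 0 :=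
          Finset.prod_eq_zero (Finset.mem_univ k0) (Set.indicator_of_notMem hk0 _)
        rw [this]
        ring
    · have h2 : ω ∉ {ω | (∀ k : Fin (n+1), I (k : ℕ) ω = idx k) ∧
          ∀ k : Fin n, α ((k : ℕ) + 1) ω ∈ S (f k)} := fun h => hmem h.1
      rw [Set.indicator_of_notMem h2, Set.indicator_of_notMem hmem]
      ring
  rw [lintegral_congr expand, lintegral_finset_sum]
  swap
  · intro f _
    refine (Measurable.mul ?_ measurable_const)
    refine Measurable.mul measurable_const (measurable_const.indicator ?_)
    have : {ω | (∀ k : Fin (n+1), I (k : ℕ) ω = idx k) ∧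
        ∀ k : Fin n, α ((k : ℕ) + 1) ω ∈ S (f k)}
        = Pth idx ∩ ⋂ k : Fin n, α ((k:ℕ)+1) ⁻¹' (S (f k)) := by
      ext ω; simp [hPth, Set.mem_iInter]
    rw [this]
    exact (hPthmeas idx).inter (MeasurableSet.iInter fun k => (hα _) (hS (f k)))
  -- evaluate each rectangle integral via hlaw
  have heval : ∀ f ∈ Fintype.piFinset (fun _ : Fin n => Finset.range NN),
      ∫⁻ ω, ((∏ k : Fin n, C (f k)) *
          (({ω | (∀ k : Fin (n+1), I (k : ℕ) ω = idx k) ∧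
             ∀ k : Fin n, α ((k : ℕ) + 1) ω ∈ S (f k)}).indicator (fun _ => (1:ℝ≥0∞)) ω))
          * u (idx (Fin.last n)) ∂μ
      = (∏ k : Fin n, C (f k)) *
          (μ {ω | I 0 ω = idx 0} * ∏ k : Fin n,
            (ENNReal.ofReal (P (idx k.castSucc) (idx k.succ)) *
              F (idx k.castSucc) (idx k.succ) (S (f k)))) * u (idx (Fin.last n)) := by
    intro f _
    have hmeasR : MeasurableSet {ω | (∀ k : Fin (n+1), I (k : ℕ) ω = idx k) ∧
        ∀ k : Fin n, α ((k : ℕ) + 1) ω ∈ S (f k)} := by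
      have : {ω | (∀ k : Fin (n+1), I (k : ℕ) ω = idx k) ∧
          ∀ k : Fin n, α ((k : ℕ) + 1) ω ∈ S (f k)}
          = Pth idx ∩ ⋂ k : Fin n, α ((k:ℕ)+1) ⁻¹' (S (f k)) := by
        ext ω; simp [hPth, Set.mem_iInter]
      rw [this]
      exact (hPthmeas idx).inter (MeasurableSet.iInter fun k => (hα _) (hS (f k)))
    have hm1 : Measurable (({ω | (∀ k : Fin (n+1), I (k : ℕ) ω = idx k) ∧
        ∀ k : Fin n, α ((k : ℕ) + 1) ω ∈ S (f k)}).indicator (fun _ => (1:ℝ≥0∞))) :=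
      measurable_const.indicator hmeasR
    rw [lintegral_mul_const _ (hm1.const_mul _), lintegral_const_mul _ hm1,
      lintegral_indicator hmeasR]
    simp only [lintegral_one, Measure.restrict_apply_univ]
    rw [hlaw n idx (fun k => S (f k)) (fun k => hS (f k))]
  rw [Finset.sum_congr rfl heval]
  -- algebra: collapse the f-sum
  rw [← Finset.sum_mul]
  congr 1
  have : ∑ f ∈ Fintype.piFinset (fun _ : Fin n => Finset.range NN),
      (∏ k : Fin n, C (f k)) *
        (μ {ω | I 0 ω = idx 0} * ∏ k : Fin n,
          (ENNReal.ofReal (P (idx k.castSucc) (idx k.succ)) *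
            F (idx k.castSucc) (idx k.succ) (S (f k))))
      = μ {ω | I 0 ω = idx 0} * ∑ f ∈ Fintype.piFinset (fun _ : Fin n => Finset.range NN),
          ∏ k : Fin n, (ENNReal.ofReal (P (idx k.castSucc) (idx k.succ)) *
            (C (f k) * F (idx k.castSucc) (idx k.succ) (S (f k)))) := by
    rw [Finset.mul_sum]
    refine Finset.sum_congr rfl fun f _ => ?_
    rw [← mul_assoc, mul_comm _ (μ _), mul_assoc]
    congr 1
    rw [← Finset.prod_mul_distrib]
    refine Finset.prod_congr rfl fun k _ => by ring
  rw [this]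
  congr 1
  have hcollapse := Finset.prod_univ_sum (fun _ : Fin n => Finset.range NN)
    (fun (k : Fin n) (m : ℕ) => ENNReal.ofReal (P (idx k.castSucc) (idx k.succ)) *
      (C m * F (idx k.castSucc) (idx k.succ) (S m)))
  rw [← hcollapse]
  refine Finset.prod_congr rfl fun k _ => ?_
  rw [← Finset.mul_sum]

lemma multChain_good_event
    (d : ℕ) (P : Matrix (Fin d) (Fin d) ℝ)
    (hPnn : ∀ i j, 0 ≤ P i j) (hProw : ∀ i, ∑ j, P i j = 1) (hPdiag : ∀ i, P i i = 0)
    (M0 : ℝ)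
    (F : Fin d → Fin d → Measure ℝ)
    (hFsupp : ∀ i j, i ≠ j → F i j (Set.Icc (1 / M0) M0) = 1)
    {Ω : Type} [MeasurableSpace Ω] (μ : Measure Ω) [IsProbabilityMeasure μ]
    (I : ℕ → Ω → Fin d) (α : ℕ → Ω → ℝ)
    (hI : ∀ r, Measurable (I r)) (hα : ∀ r, Measurable (α r))
    (hlaw : ∀ (n : ℕ) (idx : Fin (n + 1) → Fin d) (B : Fin n → Set ℝ),
      (∀ k, MeasurableSet (B k)) →
      μ {ω | (∀ k : Fin (n + 1), I (k : ℕ) ω = idx k) ∧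
             ∀ k : Fin n, α ((k : ℕ) + 1) ω ∈ B k}
        = μ {ω | I 0 ω = idx 0} *
            ∏ k : Fin n,
              (ENNReal.ofReal (P (idx k.castSucc) (idx k.succ)) *
                F (idx k.castSucc) (idx k.succ) (B k))) :
    ∀ᵐ ω ∂μ, ∀ r : ℕ, α (r+1) ω ∈ Set.Icc (1 / M0) M0 := by
  classical
  have key : ∀ n : ℕ, μ {ω | ∀ k : Fin (n+1), α ((k:ℕ)+1) ω ∈ Set.Icc (1/M0) M0} = 1 := by
    intro n
    set R : (Fin (n+2) → Fin d) → Set Ω := fun idx =>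
      {ω | (∀ k : Fin (n+2), I (k:ℕ) ω = idx k) ∧
        ∀ k : Fin (n+1), α ((k:ℕ)+1) ω ∈ Set.Icc (1/M0) M0} with hR
    have hRmeas : ∀ idx, MeasurableSet (R idx) := by
      intro idx
      have : R idx = (⋂ k : Fin (n+2), I (k:ℕ) ⁻¹' {idx k}) ∩
          ⋂ k : Fin (n+1), α ((k:ℕ)+1) ⁻¹' (Set.Icc (1/M0) M0) := by
        ext ω; simp [hR, Set.mem_iInter]
      rw [this]
      exact ((MeasurableSet.iInter fun k => (hI _) (measurableSet_singleton _))).inter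
        (MeasurableSet.iInter fun k => (hα _) measurableSet_Icc)
    have hE : {ω | ∀ k : Fin (n+1), α ((k:ℕ)+1) ω ∈ Set.Icc (1/M0) M0}
        = ⋃ idx ∈ (Finset.univ : Finset (Fin (n+2) → Fin d)), R idx := by
      ext ω
      simp only [Set.mem_setOf_eq, Set.mem_iUnion, Finset.mem_univ, exists_true_left, hR]
      constructor
      · intro h
        exact ⟨fun k => I (k:ℕ) ω, ⟨fun k => rfl, h⟩⟩
      · rintro ⟨idx, -, h⟩
        exact h
    have hdisj : Set.PairwiseDisjoint (↑(Finset.univ : Finset (Fin (n+2) → Fin d))) R := by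
      intro idx _ idx' _ hne
      refine Set.disjoint_left.2 fun ω h1 h2 => hne ?_
      exact funext fun k => ((h1.1 k).symm.trans (h2.1 k))
    rw [hE, measure_biUnion_finset hdisj fun idx _ => hRmeas idx]
    have hterm : ∀ idx : Fin (n+2) → Fin d,
        μ (R idx) = μ {ω | I 0 ω = idx 0} *
          ∏ k : Fin (n+1), ENNReal.ofReal (P (idx k.castSucc) (idx k.succ)) := by
      intro idx
      rw [hR]
      simp only
      rw [hlaw (n+1) idx (fun _ => Set.Icc (1/M0) M0) (fun _ => measurableSet_Icc)]
      congr 1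
      refine Finset.prod_congr rfl fun k _ => ?_
      by_cases hk : idx k.castSucc = idx k.succ
      · rw [hk, hPdiag, ENNReal.ofReal_zero, zero_mul]
      · rw [hFsupp _ _ hk, mul_one]
    simp_rw [hterm]
    rw [multChain_pathSum_eq d (n+1) (fun i => μ {ω | I 0 ω = i}) (fun i j => ENNReal.ofReal (P i j))
      (fun i => by rw [← ENNReal.ofReal_sum_of_nonneg (fun j _ => hPnn i j), hProw, ENNReal.ofReal_one])]
    have := MeasureTheory.sum_measure_preimage_singleton (Finset.univ : Finset (Fin d))
      (f := I 0) (μ := μ) (fun i _ => (hI 0) (measurableSet_singleton i))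
    simp only [Finset.coe_univ, Set.preimage_univ] at this
    rw [show (fun i => μ {ω | I 0 ω = i}) = fun i => μ (I 0 ⁻¹' {i}) from rfl] at *
    rw [this, measure_univ]
  rw [MeasureTheory.ae_all_iff]
  intro r
  have hsub : {ω | ∀ k : Fin (r+1), α ((k:ℕ)+1) ω ∈ Set.Icc (1/M0) M0}
      ⊆ {ω | α (r+1) ω ∈ Set.Icc (1/M0) M0} := by
    intro ω h
    have := h (Fin.last r)
    simpa using this
  have h1 : μ {ω | α (r+1) ω ∈ Set.Icc (1/M0) M0} = 1 := by
    refine le_antisymm prob_le_one ?_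
    rw [← key r]
    exact measure_mono hsub
  have hmeas : MeasurableSet {ω | α (r+1) ω ∈ Set.Icc (1/M0) M0} := (hα _) measurableSet_Icc
  rw [MeasureTheory.ae_iff]
  have : {ω | ¬ α (r+1) ω ∈ Set.Icc (1/M0) M0} = {ω | α (r+1) ω ∈ Set.Icc (1/M0) M0}ᶜ := rfl
  rw [this, measure_compl hmeas (measure_ne_top μ _), h1, measure_univ, tsub_self]

end AuxMultChain


/-- Theorem 3.1(i), existence of moments: if `∑ i, pi i * L i < 0`
and `s > 0` is such that the Perron–Frobenius eigenvalue `η` of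
`M(s) = [P i j * E[Y_{ij}^s]]` (characterized by having a strictly positive
eigenvector `v`) satisfies `η < 1`, then `E[T^s] < ∞`. -/
theorem mult_chain_moment_finite
    (d : ℕ) (hd : 2 ≤ d)
    (P : Matrix (Fin d) (Fin d) ℝ)
    (hPnn : ∀ i j, 0 ≤ P i j)
    (hProw : ∀ i, ∑ j, P i j = 1)
    (hPdiag : ∀ i, P i i = 0)
    (hPirr : ∀ i j, ∃ n : ℕ, 0 < n ∧ 0 < (P ^ n) i j)
    (pi : Fin d → ℝ)
    (hpinn : ∀ i, 0 ≤ pi i) (hpisum : ∑ i, pi i = 1)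
    (hpistat : ∀ j, ∑ i, pi i * P i j = pi j)
    (M0 : ℝ) (hM0 : 1 < M0)
    (F : Fin d → Fin d → Measure ℝ)
    (hFprob : ∀ i j, i ≠ j → IsProbabilityMeasure (F i j))
    (hFsupp : ∀ i j, i ≠ j → F i j (Set.Icc (1 / M0) M0) = 1)
    {Ω : Type} [MeasurableSpace Ω] (μ : Measure Ω) [IsProbabilityMeasure μ]
    (I : ℕ → Ω → Fin d) (α : ℕ → Ω → ℝ)
    (hI : ∀ r, Measurable (I r)) (hα : ∀ r, Measurable (α r))
    (hlaw : ∀ (n : ℕ) (idx : Fin (n + 1) → Fin d) (B : Fin n → Set ℝ),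
      (∀ k, MeasurableSet (B k)) →
      μ {ω | (∀ k : Fin (n + 1), I (k : ℕ) ω = idx k) ∧
             ∀ k : Fin n, α ((k : ℕ) + 1) ω ∈ B k}
        = μ {ω | I 0 ω = idx 0} *
            ∏ k : Fin n,
              (ENNReal.ofReal (P (idx k.castSucc) (idx k.succ)) *
                F (idx k.castSucc) (idx k.succ) (B k)))
    (hL : ∑ i, pi i * (∑ j, P i j * ∫ y, Real.log y ∂(F i j)) < 0)
    (s : ℝ) (hs : 0 < s) (η : ℝ) (v : Fin d → ℝ) (hv : ∀ i, 0 < v i)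
    (heig : (Matrix.of fun i j => P i j * ∫ y, y ^ s ∂(F i j)) *ᵥ v = η • v)
    (hη : η < 1) :
    ∫⁻ ω, ((1 : ℝ≥0∞) +
        ∑' r : ℕ, ENNReal.ofReal (∏ k ∈ Finset.Icc 1 (r + 1), α k ω)) ^ s ∂μ
      < ⊤ := by
  classical
  have hM0pos : (0:ℝ) < M0 := lt_trans one_pos hM0
  have hM0inv : (0:ℝ) < 1 / M0 := by positivity
  -- a.e. facts about F i j
  have haeF : ∀ i j, i ≠ j → ∀ᵐ y ∂(F i j), y ∈ Set.Icc (1/M0) M0 := by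
    intro i j hij
    have hprob := hFprob i j hij
    rw [MeasureTheory.ae_iff]
    have : {y : ℝ | ¬ y ∈ Set.Icc (1/M0) M0} = (Set.Icc (1/M0) M0)ᶜ := rfl
    rw [this, measure_compl measurableSet_Icc (measure_ne_top _ _), hFsupp i j hij,
      measure_univ, tsub_self]
  have hmeas_rpow : Measurable fun y : ℝ => y ^ s := by fun_prop
  have hInt : ∀ i j, i ≠ j → Integrable (fun y : ℝ => y ^ s) (F i j) := by
    intro i j hij
    have hprob := hFprob i j hij
    refine (integrable_const (M0 ^ s)).mono' hmeas_rpow.aestronglyMeasurable ?_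
    refine (haeF i j hij).mono fun y hy => ?_
    rw [Real.norm_eq_abs, abs_of_nonneg (Real.rpow_nonneg (le_trans hM0inv.le hy.1) s)]
    exact Real.rpow_le_rpow (le_trans hM0inv.le hy.1) hy.2 hs.le
  have hIntnn : ∀ i j, i ≠ j → 0 ≤ ∫ y, y ^ s ∂(F i j) := by
    intro i j hij
    exact integral_nonneg_of_ae ((haeF i j hij).mono fun y hy =>
      Real.rpow_nonneg (le_trans hM0inv.le hy.1) s)
  have hIntlb : ∀ i j, i ≠ j → (1/M0) ^ s ≤ ∫ y, y ^ s ∂(F i j) := by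
    intro i j hij
    have hprob := hFprob i j hij
    have h1 : ∫ y, (1/M0) ^ s ∂(F i j) = (1/M0)^s := by
      simp [measure_univ]
    rw [← h1]
    refine integral_mono_ae (integrable_const _) (hInt i j hij) ?_
    exact (haeF i j hij).mono fun y hy =>
      Real.rpow_le_rpow hM0inv.le hy.1 hs.le
  -- the eigen equation, coordinatewise
  have heig' : ∀ i, ∑ j, (P i j * ∫ y, y ^ s ∂(F i j)) * v j = η * v i := by
    intro i
    have := congrFun heig i
    simpa [Matrix.mulVec, dotProduct] using this
  -- positivity of η
  have hηpos : 0 < η := by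
    have hdpos : 0 < d := by omega
    set i0 : Fin d := ⟨0, hdpos⟩
    obtain ⟨j0, hj0⟩ : ∃ j, 0 < P i0 j := by
      by_contra h
      push_neg at h
      have : ∑ j, P i0 j ≤ 0 := Finset.sum_nonpos fun j _ => h j
      rw [hProw i0] at this; linarith
    have hj0ne : j0 ≠ i0 := by
      intro h; rw [h, hPdiag] at hj0; exact lt_irrefl _ hj0
    have hterm : 0 < (P i0 j0 * ∫ y, y ^ s ∂(F i0 j0)) * v j0 := by
      have hint := lt_of_lt_of_le (Real.rpow_pos_of_pos hM0inv s) (hIntlb i0 j0 (Ne.symm hj0ne))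
      exact mul_pos (mul_pos hj0 hint) (hv j0)
    have hsum : 0 < ∑ j, (P i0 j * ∫ y, y ^ s ∂(F i0 j)) * v j := by
      have hnn : ∀ j ∈ Finset.univ, (0:ℝ) ≤ (P i0 j * ∫ y, y ^ s ∂(F i0 j)) * v j := by
        intro j _
        by_cases hji : j = i0
        · subst hji; rw [hPdiag]; simp
        · exact mul_nonneg (mul_nonneg (hPnn i0 j) (hIntnn i0 j (Ne.symm hji))) (hv j).le
      calc (0:ℝ) < (P i0 j0 * ∫ y, y ^ s ∂(F i0 j0)) * v j0 := hterm
        _ ≤ ∑ j, (P i0 j * ∫ y, y ^ s ∂(F i0 j)) * v j :=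
            Finset.single_le_sum hnn (Finset.mem_univ j0)
    rw [heig' i0] at hsum
    nlinarith [hv i0]
  -- choice of the grid ratio
  set b : ℝ := (1+η)/(2*η) with hbdef
  have hb1 : 1 < b := by
    rw [hbdef, lt_div_iff₀ (by linarith)]
    linarith
  have hb0 : 0 < b := lt_trans one_pos hb1
  set Lam : ℝ := b ^ (1/s) with hLamdef
  have hLam1 : 1 < Lam := by
    rw [hLamdef]
    rw [Real.one_lt_rpow_iff_of_pos hb0]
    exact Or.inl ⟨hb1, by positivity⟩
  have hLam0 : 0 < Lam := lt_trans one_pos hLam1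
  have hLams : Lam ^ s = b := by
    rw [hLamdef, ← Real.rpow_mul hb0.le, one_div_mul_cancel hs.ne', Real.rpow_one]
  have hLsη : Lam ^ s * η = (1+η)/2 := by
    rw [hLams, hbdef]
    field_simp
  obtain ⟨NN, hNN⟩ : ∃ NN : ℕ, M0^2 < Lam ^ NN := pow_unbounded_of_one_lt (M0^2) hLam1
  -- the grid
  set t : ℕ → ℝ := fun m => (1/M0) * Lam ^ m with htdef
  have ht_pos : ∀ m, 0 < t m := fun m => by positivity
  have ht_mono : ∀ {m m'}, m ≤ m' → t m ≤ t m' := by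
    intro m m' h
    exact mul_le_mul_of_nonneg_left (pow_le_pow_right₀ hLam1.le h) hM0inv.le
  have ht_succ : ∀ m, t (m+1) = Lam * t m := by
    intro m; rw [htdef]; simp [pow_succ]; ring
  have ht_top : M0 < t NN := by
    have h1 : M0 = (1/M0) * M0^2 := by field_simp
    calc M0 = (1/M0) * M0^2 := h1
      _ < (1/M0) * Lam ^ NN := mul_lt_mul_of_pos_left hNN hM0inv
      _ = t NN := rfl
  have ht0 : t 0 = 1/M0 := by rw [htdef]; simp
  set S : ℕ → Set ℝ := fun m => Set.Ico (t m) (t (m+1)) with hSdef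
  have hSmeas : ∀ m, MeasurableSet (S m) := fun m => measurableSet_Ico
  set C : ℕ → ℝ≥0∞ := fun m => ENNReal.ofReal (t (m+1) ^ s) with hCdef
  set g : ℝ → ℝ≥0∞ := fun y => ∑ m ∈ Finset.range NN, C m * (S m).indicator (fun _ => 1) y
    with hgdef
  have huniq : ∀ {y m m'}, y ∈ S m → y ∈ S m' → m = m' := by
    intro y m m' hm hm'
    rcases lt_trichotomy m m' with h | h | h
    · exfalso
      have : t (m+1) ≤ t m' := ht_mono h
      exact absurd (lt_of_lt_of_le hm.2 (le_trans this hm'.1)) (lt_irrefl y)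
    · exact h
    · exfalso
      have : t (m'+1) ≤ t m := ht_mono h
      exact absurd (lt_of_lt_of_le hm'.2 (le_trans this hm.1)) (lt_irrefl y)
  have hcov : ∀ y ∈ Set.Icc (1/M0) M0, ENNReal.ofReal (y ^ s) ≤ g y := by
    intro y hy
    have h0 : t 0 ≤ y := by rw [ht0]; exact hy.1
    set m := Nat.findGreatest (fun m => t m ≤ y) NN with hmdef
    have hm_le : t m ≤ y := by
      rw [hmdef]
      exact Nat.findGreatest_spec (P := fun m => t m ≤ y) (Nat.zero_le NN) h0
    have hmN : m ≤ NN := Nat.findGreatest_le NN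
    have hmlt : m < NN := by
      rcases lt_or_eq_of_le hmN with h | h
      · exact h
      · exfalso
        rw [h] at hm_le
        exact absurd (lt_of_le_of_lt (le_trans hm_le hy.2) ht_top) (lt_irrefl _)
    have hub : y < t (m+1) := by
      by_contra h
      push_neg at h
      have := Nat.le_findGreatest (P := fun k => t k ≤ y) (show m+1 ≤ NN from hmlt) h
      rw [← hmdef] at this
      omega
    have hy_m : y ∈ S m := ⟨hm_le, hub⟩
    have h1 : ENNReal.ofReal (y ^ s) ≤ C m := by
      rw [hCdef]
      exact ENNReal.ofReal_le_ofReal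
        (Real.rpow_le_rpow (le_trans hM0inv.le hy.1) hub.le hs.le)
    refine le_trans h1 ?_
    have h2 : C m = C m * (S m).indicator (fun _ => (1:ℝ≥0∞)) y := by
      rw [Set.indicator_of_mem hy_m, mul_one]
    rw [h2]
    simp only [hgdef]
    exact Finset.single_le_sum (f := fun m => C m * (S m).indicator (fun _ => (1:ℝ≥0∞)) y)
      (fun m _ => zero_le) (Finset.mem_range.2 hmlt)
  have hdom : ∀ y : ℝ, g y ≤ ENNReal.ofReal (Lam ^ s) * ENNReal.ofReal (y ^ s) := by
    intro y
    by_cases hex : ∃ m ∈ Finset.range NN, y ∈ S m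
    · obtain ⟨m0, hm0r, hym0⟩ := hex
      have hy0 : 0 < y := lt_of_lt_of_le (ht_pos m0) hym0.1
      have hgy : g y = C m0 := by
        simp only [hgdef]
        rw [Finset.sum_eq_single_of_mem m0 hm0r]
        · rw [Set.indicator_of_mem hym0, mul_one]
        · intro m _ hne
          rw [Set.indicator_of_notMem, mul_zero]
          intro hym
          exact hne (huniq hym hym0)
      rw [hgy, hCdef]
      have h3 : t (m0+1) ^ s ≤ Lam ^ s * y ^ s := by
        rw [← Real.mul_rpow hLam0.le hy0.le]
        refine Real.rpow_le_rpow (ht_pos (m0+1)).le ?_ hs.le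
        rw [ht_succ m0]
        exact mul_le_mul_of_nonneg_left hym0.1 hLam0.le
      calc ENNReal.ofReal (t (m0+1) ^ s) ≤ ENNReal.ofReal (Lam ^ s * y ^ s) :=
            ENNReal.ofReal_le_ofReal h3
        _ = ENNReal.ofReal (Lam ^ s) * ENNReal.ofReal (y ^ s) :=
            ENNReal.ofReal_mul (Real.rpow_nonneg hLam0.le s)
    · push_neg at hex
      have : g y = 0 := by
        simp only [hgdef]
        refine Finset.sum_eq_zero fun m hm => ?_
        rw [Set.indicator_of_notMem (hex m hm), mul_zero]
      rw [this]
      exact zero_le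
  -- matrix entries and eigen bound in ℝ≥0∞
  set u : Fin d → ℝ≥0∞ := fun i => ENNReal.ofReal (v i) with hudef
  set Gs : Fin d → Fin d → ℝ≥0∞ :=
    fun i j => ∑ m ∈ Finset.range NN, C m * F i j (S m) with hGsdef
  set e : ℝ≥0∞ := ENNReal.ofReal (Lam ^ s) * ENNReal.ofReal η with hedef
  have he1 : e < 1 := by
    rw [hedef, ← ENNReal.ofReal_mul (Real.rpow_nonneg hLam0.le s), hLsη]
    rw [ENNReal.ofReal_lt_one]
    linarith
  have hGsle : ∀ i j, i ≠ j →
      Gs i j ≤ ENNReal.ofReal (Lam ^ s) * ENNReal.ofReal (∫ y, y ^ s ∂(F i j)) := by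
    intro i j hij
    have h1 : Gs i j = ∫⁻ y, g y ∂(F i j) := by
      simp only [hGsdef, hgdef]
      rw [lintegral_finset_sum _ (fun m _ =>
        (measurable_const.indicator (hSmeas m)).const_mul _)]
      refine Finset.sum_congr rfl fun m _ => ?_
      rw [lintegral_const_mul' _ _ ENNReal.ofReal_ne_top,
        lintegral_indicator (hSmeas m)]
      simp [Measure.restrict_apply_univ]; rfl
    rw [h1]
    calc ∫⁻ y, g y ∂(F i j)
        ≤ ∫⁻ y, ENNReal.ofReal (Lam ^ s) * ENNReal.ofReal (y ^ s) ∂(F i j) :=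
          lintegral_mono hdom
      _ = ENNReal.ofReal (Lam ^ s) * ∫⁻ y, ENNReal.ofReal (y ^ s) ∂(F i j) :=
          lintegral_const_mul' _ _ ENNReal.ofReal_ne_top
      _ = ENNReal.ofReal (Lam ^ s) * ENNReal.ofReal (∫ y, y ^ s ∂(F i j)) := by
          rw [MeasureTheory.ofReal_integral_eq_lintegral_ofReal (hInt i j hij)
            ((haeF i j hij).mono fun y hy => Real.rpow_nonneg (le_trans hM0inv.le hy.1) s)]
  have hq : ∀ i, ∑ j, (ENNReal.ofReal (P i j) * Gs i j) * u j ≤ e * u i := by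
    intro i
    have hterm : ∀ j, (ENNReal.ofReal (P i j) * Gs i j) * u j
        ≤ ENNReal.ofReal (Lam ^ s) *
            ENNReal.ofReal ((P i j * ∫ y, y ^ s ∂(F i j)) * v j) := by
      intro j
      by_cases hji : j = i
      · subst hji
        rw [hPdiag]
        simp
      · have h2 := hGsle i j (Ne.symm hji)
        calc (ENNReal.ofReal (P i j) * Gs i j) * u j
            ≤ (ENNReal.ofReal (P i j) *
                (ENNReal.ofReal (Lam ^ s) * ENNReal.ofReal (∫ y, y ^ s ∂(F i j)))) * u j := by
              gcongr
          _ = ENNReal.ofReal (Lam ^ s) *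
                ENNReal.ofReal ((P i j * ∫ y, y ^ s ∂(F i j)) * v j) := by
              rw [hudef]
              rw [ENNReal.ofReal_mul (mul_nonneg (hPnn i j) (hIntnn i j (Ne.symm hji))),
                ENNReal.ofReal_mul (hPnn i j)]
              ring
    calc ∑ j, (ENNReal.ofReal (P i j) * Gs i j) * u j
        ≤ ∑ j, ENNReal.ofReal (Lam ^ s) *
            ENNReal.ofReal ((P i j * ∫ y, y ^ s ∂(F i j)) * v j) :=
          Finset.sum_le_sum fun j _ => hterm j
      _ = ENNReal.ofReal (Lam ^ s) *
            ENNReal.ofReal (∑ j, (P i j * ∫ y, y ^ s ∂(F i j)) * v j) := by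
          rw [← Finset.mul_sum]
          congr 1
          rw [ENNReal.ofReal_sum_of_nonneg]
          intro j _
          by_cases hji : j = i
          · subst hji; rw [hPdiag]; simp
          · exact mul_nonneg (mul_nonneg (hPnn i j) (hIntnn i j (Ne.symm hji))) (hv j).le
      _ = e * u i := by
          rw [heig' i, hedef, hudef, ENNReal.ofReal_mul hηpos.le]
          ring
  -- the key moment bound
  set VS : ℝ≥0∞ := ∑ i, u i with hVSdef
  have hVStop : VS ≠ ⊤ := by
    rw [hVSdef]
    exact (ENNReal.sum_lt_top.2 fun i _ => ENNReal.ofReal_lt_top).ne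
  have hJle : ∀ n : ℕ,
      ∫⁻ ω, (∏ k : Fin n, g (α ((k : ℕ) + 1) ω)) * u (I n ω) ∂μ ≤ e ^ n * VS := by
    intro n
    have hJ := multChain_J_eq d P μ F I α hI hα hlaw n NN C S hSmeas u
    have hgJ : ∀ ω, (∏ k : Fin n, g (α ((k : ℕ) + 1) ω)) * u (I n ω)
        = (∏ k : Fin n,
            (∑ m ∈ Finset.range NN, C m * (S m).indicator (fun _ => 1) (α ((k : ℕ)+1) ω)))
            * u (I n ω) := by
      intro ω
      simp only [hgdef]
    rw [lintegral_congr hgJ, hJ]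
    calc ∑ idx : Fin (n+1) → Fin d,
          μ {ω | I 0 ω = idx 0} *
            (∏ k : Fin n, (ENNReal.ofReal (P (idx k.castSucc) (idx k.succ)) *
              ∑ m ∈ Finset.range NN, C m * F (idx k.castSucc) (idx k.succ) (S m))) *
            u (idx (Fin.last n))
        ≤ e ^ n * ∑ i, μ {ω | I 0 ω = i} * u i :=
          multChain_pathSum_le d n (fun i => μ {ω | I 0 ω = i}) u
            (fun i j => ENNReal.ofReal (P i j) * Gs i j) e hq
      _ ≤ e ^ n * VS := by
          rw [hVSdef]
          gcongr with i
          calc μ {ω | I 0 ω = i} * u i ≤ 1 * u i :=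
                mul_le_mul_left prob_le_one _
            _ = u i := one_mul _
  -- lower bound on v
  have hdpos : 0 < d := by omega
  have hne : (Finset.univ : Finset (Fin d)).Nonempty := ⟨⟨0, hdpos⟩, Finset.mem_univ _⟩
  set c0 : ℝ := Finset.univ.inf' hne v with hc0def
  have hc0 : 0 < c0 := by
    rw [hc0def, Finset.lt_inf'_iff]
    exact fun i _ => hv i
  have hc0le : ∀ i, c0 ≤ v i := fun i => Finset.inf'_le v (Finset.mem_univ i)
  set cinv : ℝ≥0∞ := (ENNReal.ofReal c0)⁻¹ with hcinvdef
  have hcinvtop : cinv ≠ ⊤ := by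
    rw [hcinvdef]
    exact ENNReal.inv_ne_top.2 (ENNReal.ofReal_pos.2 hc0).ne'
  have hone : ∀ i, (1:ℝ≥0∞) ≤ cinv * u i := by
    intro i
    have h1 : ENNReal.ofReal c0 ≤ u i := by
      rw [hudef]; exact ENNReal.ofReal_le_ofReal (hc0le i)
    calc (1:ℝ≥0∞) = cinv * ENNReal.ofReal c0 := by
          rw [hcinvdef, ENNReal.inv_mul_cancel (ENNReal.ofReal_pos.2 hc0).ne'
            ENNReal.ofReal_ne_top]
      _ ≤ cinv * u i := mul_le_mul_right h1 _
  -- the good event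
  have hgood := multChain_good_event d P hPnn hProw hPdiag M0 F hFsupp μ I α hI hα hlaw
  -- pointwise a.e. bound
  have hptA : ∀ n : ℕ, ∀ᵐ ω ∂μ,
      (ENNReal.ofReal (∏ k ∈ Finset.Icc 1 n, α k ω)) ^ s
        ≤ cinv * ((∏ k : Fin n, g (α ((k : ℕ) + 1) ω)) * u (I n ω)) := by
    intro n
    refine hgood.mono fun ω hω => ?_
    have hmem : ∀ k ∈ Finset.Icc 1 n, α k ω ∈ Set.Icc (1/M0) M0 := by
      intro k hk
      have h1 : 1 ≤ k := (Finset.mem_Icc.1 hk).1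
      have := hω (k-1)
      rwa [Nat.sub_add_cancel h1] at this
    have hpos : ∀ k ∈ Finset.Icc 1 n, 0 < α k ω :=
      fun k hk => lt_of_lt_of_le hM0inv (hmem k hk).1
    have hppos : 0 < ∏ k ∈ Finset.Icc 1 n, α k ω := Finset.prod_pos hpos
    rw [ENNReal.ofReal_rpow_of_pos hppos]
    have hps : (∏ k ∈ Finset.Icc 1 n, α k ω) ^ s = ∏ k ∈ Finset.Icc 1 n, (α k ω) ^ s :=
      (Real.finset_prod_rpow _ _ (fun k hk => (hpos k hk).le) s).symm
    rw [hps, ENNReal.ofReal_prod_of_nonneg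
      (fun k hk => Real.rpow_nonneg (hpos k hk).le s)]
    have hstep : ∏ k ∈ Finset.Icc 1 n, ENNReal.ofReal ((α k ω) ^ s)
        ≤ ∏ k ∈ Finset.Icc 1 n, g (α k ω) :=
      Finset.prod_le_prod' fun k hk => hcov _ (hmem k hk)
    have hconv : ∏ k ∈ Finset.Icc 1 n, g (α k ω)
        = ∏ k : Fin n, g (α ((k : ℕ) + 1) ω) :=
      multChain_prod_Icc_one (fun k => g (α k ω)) n
    calc ∏ k ∈ Finset.Icc 1 n, ENNReal.ofReal ((α k ω) ^ s)
        ≤ ∏ k : Fin n, g (α ((k : ℕ) + 1) ω) := hconv ▸ hstep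
      _ = (∏ k : Fin n, g (α ((k : ℕ) + 1) ω)) * 1 := (mul_one _).symm
      _ ≤ (∏ k : Fin n, g (α ((k : ℕ) + 1) ω)) * (cinv * u (I n ω)) :=
          mul_le_mul_right (hone _) _
      _ = cinv * ((∏ k : Fin n, g (α ((k : ℕ) + 1) ω)) * u (I n ω)) := by ring
  -- measurability of the A's
  set A : ℕ → Ω → ℝ≥0∞ := fun n ω => ENNReal.ofReal (∏ k ∈ Finset.Icc 1 n, α k ω) with hAdef
  have hAmeas : ∀ n, Measurable (A n) := by
    intro n
    have h1 : Measurable fun ω => ∏ k ∈ Finset.Icc 1 n, α k ω :=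
      Finset.measurable_prod _ (fun k _ => hα k)
    exact h1.ennreal_ofReal
  have hAsmeas : ∀ n, Measurable fun ω => (A n ω) ^ s := by
    intro n
    have := hAmeas n
    fun_prop
  set K : ℝ≥0∞ := cinv * VS with hKdef
  have hKtop : K ≠ ⊤ := ENNReal.mul_ne_top hcinvtop hVStop
  have hAn : ∀ n : ℕ, ∫⁻ ω, (A n ω) ^ s ∂μ ≤ K * e ^ n := by
    intro n
    calc ∫⁻ ω, (A n ω) ^ s ∂μ
        ≤ ∫⁻ ω, cinv * ((∏ k : Fin n, g (α ((k : ℕ) + 1) ω)) * u (I n ω)) ∂μ :=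
          lintegral_mono_ae (hptA n)
      _ = cinv * ∫⁻ ω, (∏ k : Fin n, g (α ((k : ℕ) + 1) ω)) * u (I n ω) ∂μ :=
          lintegral_const_mul' _ _ hcinvtop
      _ ≤ cinv * (e ^ n * VS) := mul_le_mul_right (hJle n) _
      _ = K * e ^ n := by rw [hKdef]; ring
  -- geometric decay constants
  have heeq : e = ENNReal.ofReal ((1+η)/2) := by
    rw [hedef, ← ENNReal.ofReal_mul (Real.rpow_nonneg hLam0.le s), hLsη]
  set ρ : ℝ≥0∞ := ENNReal.ofReal ((3+η)/4) with hρdef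
  have hρ0 : ρ ≠ 0 := (ENNReal.ofReal_pos.2 (by linarith)).ne'
  have hρtop : ρ ≠ ⊤ := ENNReal.ofReal_ne_top
  have hρ1 : ρ < 1 := by rw [hρdef, ENNReal.ofReal_lt_one]; linarith
  set x : ℝ≥0∞ := ρ⁻¹ * e with hxdef
  have hxlt : x < 1 := by
    have h1 : x = e / ρ := by rw [hxdef, mul_comm, div_eq_mul_inv]
    have h2 : e / ρ = ENNReal.ofReal ((1+η)/2 / ((3+η)/4)) := by
      rw [show ENNReal.ofReal ((1+η)/2 / ((3+η)/4))
          = ENNReal.ofReal ((1+η)/2) / ENNReal.ofReal ((3+η)/4) from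
        ENNReal.ofReal_div_of_pos (by linarith), heeq, hρdef]
    rw [h1, h2, ENNReal.ofReal_lt_one, div_lt_one (by linarith)]
    linarith
  set θ : ℝ≥0∞ := ρ ^ (1/s) with hθdef
  have hθ1 : θ < 1 := ENNReal.rpow_lt_one hρ1 (by positivity)
  have hgeom : ∀ z : ℝ≥0∞, z < 1 → ∑' r : ℕ, z ^ (r+1) ≠ ⊤ := by
    intro z hz
    have h1 : ∑' r : ℕ, z ^ (r+1) = z * ∑' r : ℕ, z ^ r := by
      simp_rw [pow_succ']
      exact ENNReal.tsum_mul_left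
    rw [h1, ENNReal.tsum_geometric]
    exact ENNReal.mul_ne_top (hz.trans ENNReal.one_lt_top).ne
      (ENNReal.inv_ne_top.2 (tsub_pos_of_lt hz).ne')
  set cθ : ℝ≥0∞ := ∑' r : ℕ, θ ^ (r+1) with hcθdef
  have hcθtop : cθ ≠ ⊤ := hgeom θ hθ1
  set D : Ω → ℝ≥0∞ := fun ω => ∑' r : ℕ, (ρ⁻¹) ^ (r+1) * (A (r+1) ω) ^ s with hDdef
  have hexp : s * (1/s) = 1 := mul_one_div_cancel hs.ne'
  have hAD : ∀ (r : ℕ) (ω : Ω), A (r+1) ω ≤ θ ^ (r+1) * (D ω) ^ (1/s) := by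
    intro r ω
    have h1 : (ρ⁻¹) ^ (r+1) * (A (r+1) ω) ^ s ≤ D ω := by
      rw [hDdef]
      exact ENNReal.le_tsum r
    have h2 : (A (r+1) ω) ^ s ≤ ρ ^ (r+1) * D ω := by
      have h3 := mul_le_mul_right h1 (ρ ^ (r+1))
      rwa [← mul_assoc, ← mul_pow, ENNReal.mul_inv_cancel hρ0 hρtop, one_pow, one_mul] at h3
    calc A (r+1) ω = ((A (r+1) ω) ^ s) ^ (1/s) := by
          rw [← ENNReal.rpow_mul, hexp, ENNReal.rpow_one]
      _ ≤ (ρ ^ (r+1) * D ω) ^ (1/s) := ENNReal.rpow_le_rpow h2 (by positivity)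
      _ = (ρ ^ (r+1)) ^ (1/s) * (D ω) ^ (1/s) :=
          ENNReal.mul_rpow_of_nonneg _ _ (by positivity)
      _ = θ ^ (r+1) * (D ω) ^ (1/s) := by
          congr 1
          rw [hθdef, ← ENNReal.rpow_natCast ρ (r+1), ← ENNReal.rpow_mul,
            ← ENNReal.rpow_natCast (ρ ^ (1/s)) (r+1), ← ENNReal.rpow_mul, mul_comm]
  have hstep2 : ∀ z : ℝ≥0∞, (1 + z) ^ s ≤ (2:ℝ≥0∞) ^ s * (1 + z ^ s) := by
    intro z
    rcases le_total z 1 with hz | hz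
    · calc (1 + z) ^ s ≤ (2:ℝ≥0∞) ^ s := by
            refine ENNReal.rpow_le_rpow ?_ hs.le
            calc (1:ℝ≥0∞) + z ≤ 1 + 1 := add_le_add_right hz 1
              _ = 2 := by norm_num
        _ = (2:ℝ≥0∞) ^ s * 1 := (mul_one _).symm
        _ ≤ (2:ℝ≥0∞) ^ s * (1 + z ^ s) := mul_le_mul_right le_self_add _
    · calc (1 + z) ^ s ≤ (z + z) ^ s := ENNReal.rpow_le_rpow (add_le_add_left hz z) hs.le
        _ = (2 * z) ^ s := by rw [two_mul]
        _ = (2:ℝ≥0∞) ^ s * z ^ s := ENNReal.mul_rpow_of_nonneg _ _ hs.le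
        _ ≤ (2:ℝ≥0∞) ^ s * (1 + z ^ s) := mul_le_mul_right le_add_self _
  have hptw : ∀ ω : Ω,
      ((1:ℝ≥0∞) + ∑' r : ℕ, A (r+1) ω) ^ s ≤ (2:ℝ≥0∞) ^ s * (1 + cθ ^ s * D ω) := by
    intro ω
    have hT : (1:ℝ≥0∞) + ∑' r : ℕ, A (r+1) ω ≤ 1 + cθ * (D ω) ^ (1/s) := by
      refine add_le_add_right ?_ 1
      calc ∑' r : ℕ, A (r+1) ω ≤ ∑' r : ℕ, θ ^ (r+1) * (D ω) ^ (1/s) :=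
            ENNReal.tsum_le_tsum fun r => hAD r ω
        _ = cθ * (D ω) ^ (1/s) := by rw [hcθdef, ENNReal.tsum_mul_right]
    calc ((1:ℝ≥0∞) + ∑' r : ℕ, A (r+1) ω) ^ s
        ≤ (1 + cθ * (D ω) ^ (1/s)) ^ s := ENNReal.rpow_le_rpow hT hs.le
      _ ≤ (2:ℝ≥0∞) ^ s * (1 + (cθ * (D ω) ^ (1/s)) ^ s) := hstep2 _
      _ = (2:ℝ≥0∞) ^ s * (1 + cθ ^ s * D ω) := by
          rw [ENNReal.mul_rpow_of_nonneg _ _ hs.le, ← ENNReal.rpow_mul,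
            one_div_mul_cancel hs.ne', ENNReal.rpow_one]
  -- integral of D
  have h2stop : ((2:ℝ≥0∞)) ^ s ≠ ⊤ :=
    ENNReal.rpow_ne_top_of_nonneg hs.le ENNReal.ofNat_ne_top
  have hcθs : cθ ^ s ≠ ⊤ := ENNReal.rpow_ne_top_of_nonneg hs.le hcθtop
  have hρinvtop : (ρ⁻¹ : ℝ≥0∞) ≠ ⊤ := ENNReal.inv_ne_top.2 hρ0
  have hintD : ∫⁻ ω, D ω ∂μ ≤ K * ∑' r : ℕ, x ^ (r+1) := by
    have h1 : ∫⁻ ω, D ω ∂μ = ∑' r : ℕ, (ρ⁻¹) ^ (r+1) * ∫⁻ ω, (A (r+1) ω) ^ s ∂μ := by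
      rw [hDdef]
      rw [MeasureTheory.lintegral_tsum fun r => ((hAsmeas (r+1)).const_mul _).aemeasurable]
      exact tsum_congr fun r => lintegral_const_mul' _ _ (ENNReal.pow_ne_top hρinvtop)
    rw [h1]
    calc ∑' r : ℕ, (ρ⁻¹) ^ (r+1) * ∫⁻ ω, (A (r+1) ω) ^ s ∂μ
        ≤ ∑' r : ℕ, (ρ⁻¹) ^ (r+1) * (K * e ^ (r+1)) :=
          ENNReal.tsum_le_tsum fun r => mul_le_mul_right (hAn (r+1)) _
      _ = K * ∑' r : ℕ, x ^ (r+1) := by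
          rw [← ENNReal.tsum_mul_left]
          refine tsum_congr fun r => ?_
          rw [hxdef, mul_pow]
          ring
  have hDlt : ∫⁻ ω, D ω ∂μ < ⊤ :=
    lt_of_le_of_lt hintD
      (ENNReal.mul_lt_top (lt_top_iff_ne_top.2 hKtop) (lt_top_iff_ne_top.2 (hgeom x hxlt)))
  have hDmeas : Measurable D := by
    rw [hDdef]
    exact Measurable.ennreal_tsum fun r => (hAsmeas (r+1)).const_mul _
  -- final assembly
  have hgoal : ∀ ω : Ω, ((1 : ℝ≥0∞) +
      ∑' r : ℕ, ENNReal.ofReal (∏ k ∈ Finset.Icc 1 (r + 1), α k ω)) ^ s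
      = ((1:ℝ≥0∞) + ∑' r : ℕ, A (r+1) ω) ^ s := fun ω => rfl
  calc ∫⁻ ω, ((1 : ℝ≥0∞) +
        ∑' r : ℕ, ENNReal.ofReal (∏ k ∈ Finset.Icc 1 (r + 1), α k ω)) ^ s ∂μ
      ≤ ∫⁻ ω, (2:ℝ≥0∞) ^ s * (1 + cθ ^ s * D ω) ∂μ := by
        refine lintegral_mono fun ω => ?_
        rw [hgoal ω]
        exact hptw ω
    _ = (2:ℝ≥0∞) ^ s * (1 + cθ ^ s * ∫⁻ ω, D ω ∂μ) := by
        rw [lintegral_const_mul' _ _ h2stop, lintegral_add_left measurable_const,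
          lintegral_one, measure_univ, lintegral_const_mul' _ _ hcθs]
    _ < ⊤ := by
        refine ENNReal.mul_lt_top (lt_top_iff_ne_top.2 h2stop) ?_
        refine ENNReal.add_lt_top.2 ⟨ENNReal.one_lt_top, ?_⟩
        exact ENNReal.mul_lt_top (lt_top_iff_ne_top.2 hcθs) hDlt
end

section
/- Let (Z_t)_{t\ge 0} be a sequence of nonnegative random variables adapted to a filtration (\mathcal{F}_t)_{t\ge 0}, with Z_0 constant. Let (N_n)_{n\ge 0} be a strictly increasing sequence of stopping times adapted to (\mathcal{F}_t) with N_0 = 0 and |N_{n+1} - N_n| bounded for all n \ge 0, and define the sampled process X_0 = Z_0, X_n = Z_{N_n} for n \ge 1. For a constant C > 0 let \zeta_C = \min\{t \ge 1 : Z_t \le C\} and \sigma = \min\{n \ge 1 : X_n \le C\}. If Z_0 > C and there exists \varepsilon > 0 such that for all n \ge 0, E[X_{(n+1)\wedge\sigma} \mid \mathcal{F}_{N_{n\wedge\sigma}}] \le X_{n\wedge\sigma} - \varepsilon\, E[N_{(n+1)\wedge\sigma} - N_{n\wedge\sigma} \mid \mathcal{F}_{N_{n\wedge\sigma}}] almost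 surely, then E[\zeta_C] \le Z_0/\varepsilon < \infty. -/
open MeasureTheory ENNReal

/-- The first time `t ≥ 1` at which the process `Z` is `≤ C` (`⊤` if never). -/
noncomputable def hitTime {Ω : Type} (Z : ℕ → Ω → ℝ) (C : ℝ) (ω : Ω) : ℕ∞ :=
  ⨅ t ∈ {t : ℕ | 1 ≤ t ∧ Z t ω ≤ C}, (t : ℕ∞)

/-- The index `n ∧ σ(ω)`, as a natural number (`σ` may be infinite). -/
noncomputable def stopIdx {Ω : Type} (σ : Ω → ℕ∞) (n : ℕ) (ω : Ω) : ℕ :=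
  (min (n : ℕ∞) (σ ω)).toNat

lemma iInf_coe_set_eq {s : Set ℕ} (hs : s.Nonempty) :
    (⨅ t ∈ s, (t : ℕ∞)) = ((sInf s : ℕ) : ℕ∞) := by
  apply le_antisymm
  · exact iInf₂_le _ (Nat.sInf_mem hs)
  · exact le_iInf₂ fun t ht => by exact_mod_cast Nat.sInf_le ht

lemma hitTime_le {Ω : Type} (Z : ℕ → Ω → ℝ) (C : ℝ) (ω : Ω) {t : ℕ}
    (ht : 1 ≤ t) (hZ : Z t ω ≤ C) : hitTime Z C ω ≤ (t : ℕ∞) :=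
  iInf₂_le t ⟨ht, hZ⟩

lemma hitTime_spec {Ω : Type} (Z : ℕ → Ω → ℝ) (C : ℝ) (ω : Ω)
    (h : hitTime Z C ω ≠ ⊤) :
    1 ≤ (hitTime Z C ω).toNat ∧ Z ((hitTime Z C ω).toNat) ω ≤ C := by
  have hne : {t : ℕ | 1 ≤ t ∧ Z t ω ≤ C}.Nonempty := by
    by_contra hemp
    rw [Set.not_nonempty_iff_eq_empty] at hemp
    refine h ?_
    simp only [hitTime, hemp]
    simp
  have heq : hitTime Z C ω = ((sInf {t : ℕ | 1 ≤ t ∧ Z t ω ≤ C} : ℕ) : ℕ∞) :=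
    iInf_coe_set_eq hne
  rw [heq, ENat.toNat_coe]
  exact Nat.sInf_mem hne

/-- Abstract core: if `M n` is a monotone sequence of integer "times" with `M 0 = 0`,
the drift condition holds, and the hitting time of `Z` is dominated pointwise by
`⨆ n, M n`, then the expected hitting time is at most `z / ε`. -/
theorem foster_aux
    {Ω : Type} {mΩ : MeasurableSpace Ω} (μ : Measure Ω) [IsProbabilityMeasure μ]
    (Z : ℕ → Ω → ℝ) (hnn : ∀ t ω, 0 ≤ Z t ω)
    (C z : ℝ)
    (M : ℕ → Ω → ℕ)
    (hM0 : ∀ ω, M 0 ω = 0)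
    (hZ0 : ∀ ω, Z 0 ω = z)
    (hMmono : ∀ ω, Monotone fun n => M n ω)
    (hMmeas : ∀ n, Measurable (M n))
    (m : ℕ → MeasurableSpace Ω) (hm : ∀ n, m n ≤ mΩ)
    (hYint : ∀ n, Integrable (fun ω => Z (M n ω) ω) μ)
    (hMint : ∀ n, Integrable (fun ω => (M n ω : ℝ)) μ)
    (ε : ℝ) (hε : 0 < ε)
    (hdrift : ∀ n : ℕ, ∀ᵐ ω ∂μ,
      condExp (m n) μ (fun ω' => Z (M (n+1) ω') ω') ω
        ≤ Z (M n ω) ω -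
          ε * condExp (m n) μ (fun ω' => ((M (n+1) ω' : ℝ) - (M n ω' : ℝ))) ω)
    (hpt : ∀ ω, (hitTime Z C ω : ℝ≥0∞) ≤ ⨆ n, ((M n ω : ℕ) : ℝ≥0∞)) :
    ∫⁻ ω, (hitTime Z C ω : ℝ≥0∞) ∂μ ≤ ENNReal.ofReal (z / ε) := by
  have hkey : ∀ n, (∫ ω, Z (M n ω) ω ∂μ) + ε * (∫ ω, (M n ω : ℝ) ∂μ) ≤ z := by
    intro n
    induction n with
    | zero =>
      have h1 : (fun ω => Z (M 0 ω) ω) = fun _ => z := by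
        funext ω; rw [hM0 ω]; exact hZ0 ω
      have h2 : (fun ω => ((M 0 ω : ℕ) : ℝ)) = fun _ => (0 : ℝ) := by
        funext ω; rw [hM0 ω]; norm_num
      rw [h1, h2]
      simp
    | succ n ih =>
      have hstep : (∫ ω, Z (M (n+1) ω) ω ∂μ) ≤
          (∫ ω, Z (M n ω) ω ∂μ) -
            ε * ((∫ ω, (M (n+1) ω : ℝ) ∂μ) - ∫ ω, (M n ω : ℝ) ∂μ) := by
        have hint1 : Integrable
            (condExp (m n) μ (fun ω' => Z (M (n+1) ω') ω')) μ := integrable_condExp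
        have hint2 : Integrable (fun ω => Z (M n ω) ω -
            ε * condExp (m n) μ
              (fun ω' => ((M (n+1) ω' : ℝ) - (M n ω' : ℝ))) ω) μ :=
          (hYint n).sub (integrable_condExp.const_mul ε)
        have hmono := integral_mono_ae hint1 hint2 (hdrift n)
        rw [integral_condExp (hm n)] at hmono
        rw [integral_sub (hYint n) (integrable_condExp.const_mul ε)] at hmono
        rw [integral_const_mul, integral_condExp (hm n)] at hmono
        rwa [integral_sub (hMint (n+1)) (hMint n)] at hmono
      linarith
  have hMbound : ∀ n, (∫ ω, (M n ω : ℝ) ∂μ) ≤ z / ε := by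
    intro n
    have hY0 : 0 ≤ ∫ ω, Z (M n ω) ω ∂μ := integral_nonneg fun ω => hnn _ _
    have := hkey n
    rw [le_div_iff₀ hε]
    nlinarith
  calc ∫⁻ ω, (hitTime Z C ω : ℝ≥0∞) ∂μ
      ≤ ∫⁻ ω, ⨆ n, ((M n ω : ℕ) : ℝ≥0∞) ∂μ := lintegral_mono hpt
    _ = ⨆ n, ∫⁻ ω, ((M n ω : ℕ) : ℝ≥0∞) ∂μ := by
        apply lintegral_iSup (fun n => measurable_from_nat.comp (hMmeas n))
        exact fun a b hab ω => Nat.cast_le.mpr (hMmono ω hab)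
    _ ≤ ENNReal.ofReal (z / ε) := by
        apply iSup_le
        intro n
        have h1 : ∫⁻ ω, ((M n ω : ℕ) : ℝ≥0∞) ∂μ
            = ENNReal.ofReal (∫ ω, (M n ω : ℝ) ∂μ) := by
          rw [ofReal_integral_eq_lintegral_ofReal (hMint n)
            (Filter.Eventually.of_forall fun ω => Nat.cast_nonneg _)]
          congr 1
          funext ω
          exact (ENNReal.ofReal_natCast _).symm
        rw [h1]
        exact ENNReal.ofReal_le_ofReal (hMbound n)

/-- Theorem 5.1, Foster criterion with random sampling times:
`Z` is a nonnegative adapted process with `Z 0 = z > C` constant, `N n` are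
strictly increasing stopping times with `N 0 = 0` and bounded increments, and
`X n ω = Z (N n ω) ω` is the sampled process with hitting time
`σ = min {n ≥ 1 : X n ≤ C}`, while `ζ_C = min {t ≥ 1 : Z t ≤ C}`.  If
`E[X_{(n+1)∧σ} | ℱ_{N_{n∧σ}}] ≤ X_{n∧σ} - ε E[N_{(n+1)∧σ} - N_{n∧σ} | ℱ_{N_{n∧σ}}]`
a.s. for every `n`, then `E[ζ_C] ≤ z/ε < ∞`. -/
theorem foster_criterion_sampled
    {Ω : Type} {mΩ : MeasurableSpace Ω} (μ : Measure Ω) [IsProbabilityMeasure μ]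
    (ℱ : Filtration ℕ mΩ) (Z : ℕ → Ω → ℝ) (hadapt : Adapted ℱ Z)
    (hnn : ∀ t ω, 0 ≤ Z t ω)
    (C z : ℝ) (hC : 0 < C) (hz : C < z) (hZ0 : ∀ ω, Z 0 ω = z)
    (N : ℕ → Ω → ℕ)
    (hN0 : ∀ ω, N 0 ω = 0)
    (hNmono : ∀ n ω, N n ω < N (n + 1) ω)
    (hNbdd : ∀ n, ∃ b : ℕ, ∀ ω, N (n + 1) ω - N n ω ≤ b)
    (hNstop : ∀ n, IsStoppingTime ℱ (fun ω => (N n ω : WithTop ℕ)))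
    (hτ : ∀ n : ℕ, IsStoppingTime ℱ
      (fun ω => N (stopIdx (hitTime (fun n ω => Z (N n ω) ω) C) n ω) ω))
    (hXint : ∀ n : ℕ, Integrable
      (fun ω => Z (N (stopIdx (hitTime (fun n ω => Z (N n ω) ω) C) n ω) ω) ω) μ)
    (hNint : ∀ n : ℕ, Integrable
      (fun ω => (N (stopIdx (hitTime (fun n ω => Z (N n ω) ω) C) n ω) ω : ℝ)) μ)
    (ε : ℝ) (hε : 0 < ε)
    (hdrift : ∀ n : ℕ, ∀ᵐ ω ∂μ,
      condExp (hτ n).measurableSpace μ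
          (fun ω' =>
            Z (N (stopIdx (hitTime (fun n ω => Z (N n ω) ω) C) (n + 1) ω') ω') ω') ω
        ≤ Z (N (stopIdx (hitTime (fun n ω => Z (N n ω) ω) C) n ω) ω) ω -
          ε * condExp (hτ n).measurableSpace μ
            (fun ω' =>
              (N (stopIdx (hitTime (fun n ω => Z (N n ω) ω) C) (n + 1) ω') ω' : ℝ)
                - (N (stopIdx (hitTime (fun n ω => Z (N n ω) ω) C) n ω') ω' : ℝ)) ω) :
    ∫⁻ ω, (hitTime Z C ω : ℝ≥0∞) ∂μ ≤ ENNReal.ofReal (z / ε) := by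
  classical
  have hNge : ∀ n ω, n ≤ N n ω := by
    intro n ω
    induction n with
    | zero => exact Nat.zero_le _
    | succ k ih => exact Nat.lt_of_le_of_lt ih (hNmono k ω)
  have hNmono' : ∀ ω, Monotone fun n => N n ω :=
    fun ω => monotone_nat_of_le_succ fun k => le_of_lt (hNmono k ω)
  refine foster_aux μ Z hnn C z
    (fun n ω => N (stopIdx (hitTime (fun n ω => Z (N n ω) ω) C) n ω) ω)
    ?_ hZ0 ?_ ?_ (fun n => (hτ n).measurableSpace)
    (fun n => (hτ n).measurableSpace_le) hXint hNint ε hε hdrift ?_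
  · -- M 0 = 0
    intro ω
    have h0 : stopIdx (hitTime (fun n ω => Z (N n ω) ω) C) 0 ω = 0 := by
      simp [stopIdx]
    simp only [h0]
    exact hN0 ω
  · -- monotone
    intro ω
    apply monotone_nat_of_le_succ
    intro k
    apply hNmono' ω
    unfold stopIdx
    apply ENat.toNat_le_toNat
    · exact min_le_min (by exact_mod_cast Nat.le_succ k) le_rfl
    · exact ne_top_of_le_ne_top (by exact_mod_cast ENat.coe_ne_top (k+1)) (min_le_left _ _)
  · -- measurable
    intro n
    exact (measurable_of_countable (fun x : WithTop ℕ => WithTop.untopD 0 x)).comp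
      (((hτ n).measurable).mono (hτ n).measurableSpace_le le_rfl)
  · -- pointwise bound
    intro ω
    set σ : Ω → ℕ∞ := hitTime (fun n ω => Z (N n ω) ω) C with hσdef
    rcases eq_or_ne (σ ω) ⊤ with h | h
    · have htop : (⨆ n, ((N (stopIdx σ n ω) ω : ℕ) : ℝ≥0∞)) = ⊤ := by
        rw [eq_top_iff, ← ENNReal.iSup_natCast]
        apply iSup_mono
        intro n
        have hidx : stopIdx σ n ω = n := by
          unfold stopIdx
          rw [h]
          simp
        rw [hidx]
        exact_mod_cast hNge n ω
      rw [htop]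
      exact le_top
    · set k : ℕ := (σ ω).toNat with hkdef
      have hσk : ((k : ℕ) : ℕ∞) = σ ω := ENat.coe_toNat h
      obtain ⟨hk1, hkC⟩ := hitTime_spec (fun n ω => Z (N n ω) ω) C ω h
      have hζ : hitTime Z C ω ≤ ((N k ω : ℕ) : ℕ∞) :=
        hitTime_le Z C ω (le_trans hk1 (hNge k ω)) hkC
      have hidx : stopIdx σ k ω = k := by
        unfold stopIdx
        rw [← hσk, min_self, ENat.toNat_coe]
      calc (hitTime Z C ω : ℝ≥0∞) ≤ ((N k ω : ℕ) : ℝ≥0∞) := by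
            have := ENat.toENNReal_le.mpr hζ
            rwa [ENat.toENNReal_coe] at this
        _ = ((N (stopIdx σ k ω) ω : ℕ) : ℝ≥0∞) := by rw [hidx]
        _ ≤ ⨆ n, ((N (stopIdx σ n ω) ω : ℕ) : ℝ≥0∞) :=
            le_iSup (fun n => ((N (stopIdx σ n ω) ω : ℕ) : ℝ≥0∞)) k
end

section
/- Let m_0 > 0, let 0 < \theta_L \le \theta_0 and \theta' > 0 with \theta_0 + \theta' \le \theta_U < \pi/2, and let \rho \ge m_0. Let a, b > 0 satisfy \rho\,(a\cos(\theta_0 + \theta') - b\sin(\theta_0 + \theta')) = 1. Then \rho\,(-a\cos\theta_0 + b\sin\theta_0) \le -1 - \varepsilon\,\max(a,b), where \varepsilon = m_0\,\theta'\,\min(\sin\theta_L, \cos\theta_U) > 0; in particular \rho\,(-a\cos\theta_0 + b\sin\theta_0) \le -\varepsilon\,\max(a,b). -/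
/-!
Turning the angle from `θ₀` to `θ₀ + θ'` lowers `cos` by at least `θ' sin θ_L` and raises `sin`
by at least `θ' cos θ_U` (mean value theorem, the angles staying in `[θ_L, θ_U] ⊆ (0, π/2)`).
So the drift of `a x + b y` along `D⁰` falls below its value `-1` along `D⁺` by at least
`ρ θ' (a sin θ_L + b cos θ_U) ≥ m₀ θ' min(sin θ_L, cos θ_U) max(a, b)`.
-/

open Real Set

theorem mul_sin_le_cos_sub_cos {θ x y : ℝ} (hθ : -(π / 2) ≤ θ) (hθx : θ ≤ x) (hxy : x ≤ y)
    (hy : y ≤ π / 2) : (y - x) * sin θ ≤ cos x - cos y := by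
  have hderiv : ∀ t ∈ interior (Icc x y), sin θ ≤ deriv (fun t => -cos t) t := by
    rw [interior_Icc]
    rintro t ⟨hxt, hty⟩
    rw [deriv.fun_neg, deriv_cos', neg_neg]
    exact sin_le_sin_of_le_of_le_pi_div_two hθ (by linarith) (by linarith)
  have hmvt := (convex_Icc x y).mul_sub_le_image_sub_of_le_deriv (f := fun t => -cos t)
    continuous_cos.neg.continuousOn
    differentiable_cos.neg.differentiableOn hderiv x (left_mem_Icc.2 hxy) y (right_mem_Icc.2 hxy) hxy
  linarith [hmvt]

theorem mul_cos_le_sin_sub_sin {θ x y : ℝ} (hx : 0 ≤ x) (hxy : x ≤ y) (hyθ : y ≤ θ)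
    (hθ : θ ≤ π) : (y - x) * cos θ ≤ sin y - sin x := by
  have := mul_sin_le_cos_sub_cos (θ := π / 2 - θ) (x := π / 2 - y) (y := π / 2 - x)
    (by linarith) (by linarith) (by linarith) (by linarith)
  rwa [sin_pi_div_two_sub, cos_pi_div_two_sub, cos_pi_div_two_sub, sub_sub_sub_cancel_left] at this

theorem min_mul_max_le_mul_add_mul {a b s t : ℝ} (ha : 0 ≤ a) (hb : 0 ≤ b) (hs : 0 ≤ s)
    (ht : 0 ≤ t) : min s t * max a b ≤ a * s + b * t :=
  calc min s t * max a b
      ≤ min s t * (a + b) := by gcongr; exact max_le (by linarith) (by linarith)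
    _ = a * min s t + b * min s t := by ring
    _ ≤ a * s + b * t := by gcongr <;> simp

/-- the geometric estimate underlying Lemma 4.5.  With
`ε = m₀ θ' min(sin θ_L, cos θ_U) > 0`, if `ρ (a cos(θ₀+θ') - b sin(θ₀+θ')) = 1`
then `ρ (-a cos θ₀ + b sin θ₀) ≤ -1 - ε max(a,b)`, and in particular
`ρ (-a cos θ₀ + b sin θ₀) ≤ -ε max(a,b)`. -/
theorem drift_angle_estimate (m0 θL θ0 θ' θU ρ a b : ℝ)
    (hm0 : 0 < m0) (hθL : 0 < θL) (hθL0 : θL ≤ θ0) (hθ' : 0 < θ')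
    (hθU : θ0 + θ' ≤ θU) (hθU2 : θU < Real.pi / 2) (hρ : m0 ≤ ρ)
    (ha : 0 < a) (hb : 0 < b)
    (hnorm : ρ * (a * Real.cos (θ0 + θ') - b * Real.sin (θ0 + θ')) = 1) :
    0 < m0 * θ' * min (Real.sin θL) (Real.cos θU) ∧
    ρ * (-a * Real.cos θ0 + b * Real.sin θ0)
        ≤ -1 - m0 * θ' * min (Real.sin θL) (Real.cos θU) * max a b ∧
    ρ * (-a * Real.cos θ0 + b * Real.sin θ0)
        ≤ -(m0 * θ' * min (Real.sin θL) (Real.cos θU)) * max a b := by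
  have hsinL : 0 < sin θL := sin_pos_of_pos_of_lt_pi hθL (by linarith [pi_pos])
  have hcosU : 0 < cos θU := cos_pos_of_mem_Ioo ⟨by linarith [pi_pos], hθU2⟩
  have hε : 0 < m0 * θ' * min (sin θL) (cos θU) := by positivity
  have hcos := mul_sin_le_cos_sub_cos (x := θ0) (y := θ0 + θ') (by linarith [pi_pos]) hθL0
    (by linarith) (by linarith)
  have hsin := mul_cos_le_sin_sub_sin (x := θ0) (y := θ0 + θ') (by linarith) (by linarith) hθU
    (by linarith [pi_pos])
  rw [add_sub_cancel_left] at hcos hsin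
  have hgain : m0 * θ' * min (sin θL) (cos θU) * max a b
      ≤ ρ * (a * (cos θ0 - cos (θ0 + θ')) + b * (sin (θ0 + θ') - sin θ0)) :=
    calc m0 * θ' * min (sin θL) (cos θU) * max a b
        = m0 * (min (θ' * sin θL) (θ' * cos θU) * max a b) := by
          rw [← mul_min_of_nonneg _ _ hθ'.le]; ring
      _ ≤ m0 * (a * (θ' * sin θL) + b * (θ' * cos θU)) := by
          gcongr; exact min_mul_max_le_mul_add_mul ha.le hb.le (by positivity) (by positivity)
      _ ≤ ρ * (a * (cos θ0 - cos (θ0 + θ')) + b * (sin (θ0 + θ') - sin θ0)) := by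
          gcongr; linarith
  refine ⟨hε, ?_, ?_⟩ <;> linarith
end

section
/- Let \varepsilon, \kappa, c > 0 and A > 1 satisfy \varepsilon A > \kappa (1 - 1/A)^{-3}. Let Z \ge cA be a real constant and let \Delta be an integrable real random variable with \Delta \ge -c almost surely, E[\Delta] \ge \varepsilon c and E[\Delta^2] \le \kappa c^2. Then E[1/(Z + \Delta)] < 1/Z. -/
open MeasureTheory

/-- the one-step estimate underlying Lemma 5.2.  If
`ε A > κ (1 - 1/A)⁻³`, `Z ≥ cA` is constant and the integrable random variable
`Δ` satisfies `Δ ≥ -c` a.s., `E[Δ] ≥ ε c` and `E[Δ²] ≤ κ c²`, then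
`E[1/(Z + Δ)] < 1/Z`. -/
theorem one_step_supermartingale_estimate {Ω : Type} [MeasurableSpace Ω]
    (μ : Measure Ω) [IsProbabilityMeasure μ]
    (ε κ c A Z : ℝ) (hε : 0 < ε) (hκ : 0 < κ) (hc : 0 < c) (hA : 1 < A)
    (hAbig : κ * ((1 - 1 / A) ^ 3)⁻¹ < ε * A)
    (hZ : c * A ≤ Z)
    (Δ : Ω → ℝ) (hΔint : Integrable Δ μ)
    (hΔsq : Integrable (fun ω => Δ ω ^ 2) μ)
    (hΔlb : ∀ᵐ ω ∂μ, -c ≤ Δ ω)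
    (hmean : ε * c ≤ ∫ ω, Δ ω ∂μ)
    (hsq : ∫ ω, Δ ω ^ 2 ∂μ ≤ κ * c ^ 2) :
    ∫ ω, (Z + Δ ω)⁻¹ ∂μ < 1 / Z := by
  have hA0 : 0 < A := lt_trans one_pos hA
  have hB : 0 < 1 - 1 / A := by
    have : 1 / A < 1 := by
      rw [div_lt_one hA0]; exact hA
    linarith
  have hB1 : 1 - 1 / A ≤ 1 := by
    have : 0 < 1 / A := by positivity
    linarith
  have hZpos : 0 < Z := lt_of_lt_of_le (by positivity) hZ
  set ZB : ℝ := Z * (1 - 1 / A) with hZBdef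
  have hZB : 0 < ZB := mul_pos hZpos hB
  -- κ < ε A B³
  have hκ' : κ < ε * A * (1 - 1 / A) ^ 3 := by
    have hx : (0:ℝ) < (1 - 1 / A) ^ 3 := by positivity
    rw [← div_eq_mul_inv, div_lt_iff₀ hx] at hAbig
    linarith
  have hB3 : (1 - 1 / A) ^ 3 ≤ (1 - 1 / A) := by
    have hB2 : (1 - 1 / A) ^ 2 ≤ 1 := by nlinarith
    nlinarith [mul_le_mul_of_nonneg_right hB2 hB.le]
  have hkc : κ * c < ε * Z * (1 - 1 / A) := by
    nlinarith [mul_nonneg (mul_nonneg hε.le hc.le) (mul_nonneg hA0.le (sub_nonneg.mpr hB3)),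
      mul_nonneg (mul_nonneg hε.le hB.le) (sub_nonneg.mpr hZ)]
  -- a.e. lower bound on Z + Δ
  have hlow : ∀ᵐ ω ∂μ, ZB ≤ Z + Δ ω := by
    filter_upwards [hΔlb] with ω hω
    have hcZ : c ≤ Z / A := by
      rw [le_div_iff₀ hA0]; linarith
    have : Z * (1 - 1 / A) = Z - Z / A := by ring
    rw [hZBdef, this]
    linarith
  -- pointwise upper bound
  have hpt : ∀ᵐ ω ∂μ,
      (Z + Δ ω)⁻¹ ≤ Z⁻¹ - Δ ω / Z ^ 2 + Δ ω ^ 2 / (Z ^ 2 * ZB) := by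
    filter_upwards [hlow] with ω hω
    have hpos : 0 < Z + Δ ω := lt_of_lt_of_le hZB hω
    have h1 : (Z + Δ ω)⁻¹ = Z⁻¹ - Δ ω / Z ^ 2 + Δ ω ^ 2 / (Z ^ 2 * (Z + Δ ω)) := by
      field_simp
      ring
    rw [h1]
    gcongr
  -- integrability of LHS
  have hmeas : AEStronglyMeasurable (fun ω => (Z + Δ ω)⁻¹) μ :=
    ((aestronglyMeasurable_const.add hΔint.aestronglyMeasurable).aemeasurable.inv).aestronglyMeasurable
  have hLHSint : Integrable (fun ω => (Z + Δ ω)⁻¹) μ := by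
    refine Integrable.mono' (integrable_const ZB⁻¹) hmeas ?_
    filter_upwards [hlow] with ω hω
    have hpos : 0 < Z + Δ ω := lt_of_lt_of_le hZB hω
    rw [Real.norm_eq_abs, abs_of_pos (inv_pos.mpr hpos)]
    exact inv_anti₀ hZB hω
  have hRHSint : Integrable (fun ω => Z⁻¹ - Δ ω / Z ^ 2 + Δ ω ^ 2 / (Z ^ 2 * ZB)) μ :=
    ((integrable_const _).sub (hΔint.div_const _)).add (hΔsq.div_const _)
  have hle := integral_mono_ae hLHSint hRHSint hpt
  have hRHS : ∫ ω, (Z⁻¹ - Δ ω / Z ^ 2 + Δ ω ^ 2 / (Z ^ 2 * ZB)) ∂μ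
      = Z⁻¹ - (∫ ω, Δ ω ∂μ) / Z ^ 2 + (∫ ω, Δ ω ^ 2 ∂μ) / (Z ^ 2 * ZB) := by
    rw [integral_add (f := fun ω => Z⁻¹ - Δ ω / Z ^ 2)
        (g := fun ω => Δ ω ^ 2 / (Z ^ 2 * ZB))
        ((integrable_const _).sub (hΔint.div_const _)) (hΔsq.div_const _),
      integral_sub (integrable_const _) (hΔint.div_const _), integral_const,
      integral_div, integral_div]
    simp
  rw [hRHS] at hle
  have h3 : (∫ ω, Δ ω ^ 2 ∂μ) / (Z ^ 2 * ZB) < (∫ ω, Δ ω ∂μ) / Z ^ 2 := by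
    rw [div_lt_div_iff₀ (by positivity) (by positivity)]
    have hs' : (∫ ω, Δ ω ^ 2 ∂μ) ≤ κ * c ^ 2 := hsq
    have hm' : ε * c ≤ ∫ ω, Δ ω ∂μ := hmean
    have hkey : κ * c ^ 2 * Z ^ 2 < ε * c * (Z ^ 2 * ZB) := by
      rw [hZBdef]
      nlinarith [mul_lt_mul_of_pos_right hkc (by positivity : (0:ℝ) < c * Z ^ 2)]
    nlinarith [mul_le_mul_of_nonneg_right hm' (le_of_lt (show (0:ℝ) < Z ^ 2 * ZB by positivity)),
      mul_le_mul_of_nonneg_right hs' (sq_nonneg Z)]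
  have : Z⁻¹ - (∫ ω, Δ ω ∂μ) / Z ^ 2 + (∫ ω, Δ ω ^ 2 ∂μ) / (Z ^ 2 * ZB) < Z⁻¹ := by
    linarith
  rw [one_div]
  linarith
end
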